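/- arXiv:2506.15429 — 3 statements merged into one kernel-verified Lean document; each statement's English description precedes it below -/
import Mathlib

section
/- With notation as in the context, one has the identity (2A − 3u)(2A − 3v)(2A − 3w) = −16(4A³ + 27B²) in K. In particular, since 4A³ + 27B² ≠ 0, each of the three elements 2A − 3u, 2A − 3v, 2A − 3w is nonzero. -/
open Polynomial

/-!
The pairings `u, v, w` are the roots of the resolvent cubic of `ψ₃`, so their elementary symmetric
functions are polynomials in those of `x₁, …, x₄`, which Vieta's formulas express through `A` and
`B`. Expanding the product `(2A − 3u)(2A − 3v)(2A − 3w)` in these symmetric functions gives the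
identity. Only `x₁ + x₂ + x₃ + x₄ = 0` needs `3` to be invertible: the other Vieta relations enter
multiplied by `3`.
-/

section Quartic

variable {R : Type*} [CommRing R]

theorem C_mul_prod_four_X_sub_C (a x₁ x₂ x₃ x₄ : R) :
    C a * (X - C x₁) * (X - C x₂) * (X - C x₃) * (X - C x₄)
      = C a * X ^ 4 - C (a * (x₁ + x₂ + x₃ + x₄)) * X ^ 3
        + C (a * (x₁ * x₂ + x₁ * x₃ + x₁ * x₄ + x₂ * x₃ + x₂ * x₄ + x₃ * x₄)) * X ^ 2
        - C (a * (x₁ * x₂ * x₃ + x₁ * x₂ * x₄ + x₁ * x₃ * x₄ + x₂ * x₃ * x₄)) * X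
        + C (a * (x₁ * x₂ * x₃ * x₄)) := by
  simp only [map_mul, map_add]
  ring

theorem vieta_of_psi3_eq (A B x₁ x₂ x₃ x₄ : R)
    (hψ : C 3 * X ^ 4 + C (6 * A) * X ^ 2 + C (12 * B) * X - C (A ^ 2)
        = C 3 * (X - C x₁) * (X - C x₂) * (X - C x₃) * (X - C x₄)) :
    3 * (x₁ + x₂ + x₃ + x₄) = 0 ∧
      3 * (x₁ * x₂ + x₁ * x₃ + x₁ * x₄ + x₂ * x₃ + x₂ * x₄ + x₃ * x₄) = 6 * A ∧
      3 * (x₁ * x₂ * x₃ + x₁ * x₂ * x₄ + x₁ * x₃ * x₄ + x₂ * x₃ * x₄) = -(12 * B) ∧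
      3 * (x₁ * x₂ * x₃ * x₄) = -A ^ 2 := by
  rw [C_mul_prod_four_X_sub_C] at hψ
  have hcoeff (n : ℕ) := congrArg (coeff · n) hψ
  simp only [coeff_add, coeff_sub, coeff_C_mul, coeff_X_pow, coeff_X, coeff_C] at hcoeff
  have h₃ := hcoeff 3
  have h₂ := hcoeff 2
  have h₁ := hcoeff 1
  have h₀ := hcoeff 0
  norm_num at h₃ h₂ h₁ h₀
  exact ⟨h₃, h₂.symm, by linear_combination h₁, h₀.symm⟩

theorem resolvent_cubic_symm {x₁ x₂ x₃ x₄ u v w : R} (hu : u = x₁ * x₂ + x₃ * x₄)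
    (hv : v = x₁ * x₃ + x₂ * x₄) (hw : w = x₁ * x₄ + x₂ * x₃) :
    u + v + w = x₁ * x₂ + x₁ * x₃ + x₁ * x₄ + x₂ * x₃ + x₂ * x₄ + x₃ * x₄ ∧
      u * v + u * w + v * w
        = (x₁ + x₂ + x₃ + x₄) * (x₁ * x₂ * x₃ + x₁ * x₂ * x₄ + x₁ * x₃ * x₄ + x₂ * x₃ * x₄)
          - 4 * (x₁ * x₂ * x₃ * x₄) ∧
      u * v * w
        = (x₁ + x₂ + x₃ + x₄) ^ 2 * (x₁ * x₂ * x₃ * x₄)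
          + (x₁ * x₂ * x₃ + x₁ * x₂ * x₄ + x₁ * x₃ * x₄ + x₂ * x₃ * x₄) ^ 2
          - 4 * (x₁ * x₂ + x₁ * x₃ + x₁ * x₄ + x₂ * x₃ + x₂ * x₄ + x₃ * x₄)
            * (x₁ * x₂ * x₃ * x₄) := by
  subst hu hv hw
  exact ⟨by ring, by ring, by ring⟩

theorem resolvent_product_eq_neg_sixteen_mul_disc {A B x₁ x₂ x₃ x₄ u v w : R}
    (he₁ : x₁ + x₂ + x₃ + x₄ = 0)
    (he₂ : 3 * (x₁ * x₂ + x₁ * x₃ + x₁ * x₄ + x₂ * x₃ + x₂ * x₄ + x₃ * x₄) = 6 * A)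
    (he₃ : 3 * (x₁ * x₂ * x₃ + x₁ * x₂ * x₄ + x₁ * x₃ * x₄ + x₂ * x₃ * x₄) = -(12 * B))
    (he₄ : 3 * (x₁ * x₂ * x₃ * x₄) = -A ^ 2)
    (hu : u = x₁ * x₂ + x₃ * x₄) (hv : v = x₁ * x₃ + x₂ * x₄) (hw : w = x₁ * x₄ + x₂ * x₃) :
    (2 * A - 3 * u) * (2 * A - 3 * v) * (2 * A - 3 * w) = -16 * (4 * A ^ 3 + 27 * B ^ 2) := by
  obtain ⟨hsum, hpair, hprod⟩ := resolvent_cubic_symm hu hv hw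
  rw [he₁] at hpair hprod
  set e₂ := x₁ * x₂ + x₁ * x₃ + x₁ * x₄ + x₂ * x₃ + x₂ * x₄ + x₃ * x₄
  set e₃ := x₁ * x₂ * x₃ + x₁ * x₂ * x₄ + x₁ * x₃ * x₄ + x₂ * x₃ * x₄
  set e₄ := x₁ * x₂ * x₃ * x₄
  calc (2 * A - 3 * u) * (2 * A - 3 * v) * (2 * A - 3 * w)
      = 8 * A ^ 3 - 12 * A ^ 2 * (u + v + w) + 18 * A * (u * v + u * w + v * w)
          - 27 * (u * v * w) := by ring
    _ = 8 * A ^ 3 - 12 * A ^ 2 * e₂ - 72 * A * e₄ - 27 * e₃ ^ 2 + 108 * e₂ * e₄ := by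
      rw [hsum, hpair, hprod]; ring
    _ = -16 * (4 * A ^ 3 + 27 * B ^ 2) := by
      linear_combination
        (36 * e₂ - 24 * A) * he₄ - 16 * A ^ 2 * he₂ - 3 * (3 * e₃ - 12 * B) * he₃

end Quartic

/-- With `ψ₃(X) = 3X⁴ + 6AX² + 12BX − A² = 3(X−x₁)(X−x₂)(X−x₃)(X−x₄)` over a field `K` of
characteristic different from `2` and `3`, with `4A³ + 27B² ≠ 0`, and
`u = x₁x₂ + x₃x₄`, `v = x₁x₃ + x₂x₄`, `w = x₁x₄ + x₂x₃`, one has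
`(2A − 3u)(2A − 3v)(2A − 3w) = −16(4A³ + 27B²)`; in particular the three factors are nonzero. -/
theorem stmt2 {K : Type*} [Field K] (h2 : (2 : K) ≠ 0) (h3 : (3 : K) ≠ 0)
    (A B : K) (hΔ : 4 * A ^ 3 + 27 * B ^ 2 ≠ 0) (x₁ x₂ x₃ x₄ : K)
    (hψ : C 3 * X ^ 4 + C (6 * A) * X ^ 2 + C (12 * B) * X - C (A ^ 2)
        = C 3 * (X - C x₁) * (X - C x₂) * (X - C x₃) * (X - C x₄))
    (u v w : K) (hu : u = x₁ * x₂ + x₃ * x₄) (hv : v = x₁ * x₃ + x₂ * x₄)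
    (hw : w = x₁ * x₄ + x₂ * x₃) :
    (2 * A - 3 * u) * (2 * A - 3 * v) * (2 * A - 3 * w)
        = -16 * (4 * A ^ 3 + 27 * B ^ 2) ∧
      (2 * A - 3 * u ≠ 0 ∧ 2 * A - 3 * v ≠ 0 ∧ 2 * A - 3 * w ≠ 0) := by
  obtain ⟨he₁, he₂, he₃, he₄⟩ := vieta_of_psi3_eq A B x₁ x₂ x₃ x₄ hψ
  have key := resolvent_product_eq_neg_sixteen_mul_disc
    ((mul_eq_zero.mp he₁).resolve_left h3) he₂ he₃ he₄ hu hv hw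
  have h16 : (-16 : K) ≠ 0 := by
    simpa [show (16 : K) = 2 ^ 4 by norm_num] using pow_ne_zero 4 h2
  have hprod : (2 * A - 3 * u) * (2 * A - 3 * v) * (2 * A - 3 * w) ≠ 0 := by
    rw [key]
    exact mul_ne_zero h16 hΔ
  obtain ⟨huv, hw₀⟩ := mul_ne_zero_iff.mp hprod
  obtain ⟨hu₀, hv₀⟩ := mul_ne_zero_iff.mp huv
  exact ⟨key, hu₀, hv₀, hw₀⟩
end

section
/- With notation as in the context, each of the three elements 2A − 3u, 2A − 3v, 2A − 3w is nonzero, and each of the three field elements c_u = −48A/(2A − 3u), c_v = −48A/(2A − 3v), c_w = −48A/(2A − 3w) satisfies c³ = j(E), where j(E) = 6912·A³/(4A³ + 27B²) is the j-invariant of E. That is, each of the three displayed values is a cube root of the j-invariant of E. -/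
/-!
Comparing coefficients in `ψ₃ = 3(X − x₁)(X − x₂)(X − x₃)(X − x₄)` gives
`Σ xᵢ = 0`, `e₂ = 2A`, `e₃ = −4B`, `3e₄ = −A²`, and from these one checks that
`(2A − 3u)³ = −16Δ` with `Δ = 4A³ + 27B²`; permuting the roots gives the same for `v` and `w`.
Since `Δ ≠ 0` the three elements `2A − 3t` are nonzero, and `(−48A)³ / (−16Δ) = 6912A³ / Δ`.
-/

open Polynomial

theorem Polynomial.quartic_coeffs_of_eq_C_mul_prod_X_sub_C {R : Type*} [CommRing R]
    {k a b c d x₁ x₂ x₃ x₄ : R}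
    (h : C k * X ^ 4 + C a * X ^ 3 + C b * X ^ 2 + C c * X + C d
      = C k * (X - C x₁) * (X - C x₂) * (X - C x₃) * (X - C x₄)) :
    a = -k * (x₁ + x₂ + x₃ + x₄) ∧
      b = k * (x₁ * x₂ + x₁ * x₃ + x₁ * x₄ + x₂ * x₃ + x₂ * x₄ + x₃ * x₄) ∧
      c = -k * (x₁ * x₂ * x₃ + x₁ * x₂ * x₄ + x₁ * x₃ * x₄ + x₂ * x₃ * x₄) ∧
      d = k * (x₁ * x₂ * x₃ * x₄) := by
  rw [show C k * (X - C x₁) * (X - C x₂) * (X - C x₃) * (X - C x₄)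
      = C k * X ^ 4 + C (-k * (x₁ + x₂ + x₃ + x₄)) * X ^ 3
        + C (k * (x₁ * x₂ + x₁ * x₃ + x₁ * x₄ + x₂ * x₃ + x₂ * x₄ + x₃ * x₄)) * X ^ 2
        + C (-k * (x₁ * x₂ * x₃ + x₁ * x₂ * x₄ + x₁ * x₃ * x₄ + x₂ * x₃ * x₄)) * X
        + C (k * (x₁ * x₂ * x₃ * x₄)) by simp only [map_mul, map_neg, map_add]; ring] at h
  have hcoeff (n : ℕ) := congrArg (coeff · n) h
  simp only [coeff_add, coeff_C_mul_X_pow, coeff_C_mul_X, coeff_C] at hcoeff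
  exact ⟨by simpa using hcoeff 3, by simpa using hcoeff 2, by simpa using hcoeff 1,
    by simpa using hcoeff 0⟩

theorem two_mul_sub_three_mul_pair_sum_cube {R : Type*} [CommRing R] {A B x₁ x₂ x₃ x₄ : R}
    (hψ : C 3 * X ^ 4 + C (6 * A) * X ^ 2 + C (12 * B) * X - C (A ^ 2)
        = C 3 * (X - C x₁) * (X - C x₂) * (X - C x₃) * (X - C x₄)) :
    (2 * A - 3 * (x₁ * x₂ + x₃ * x₄)) ^ 3 = -16 * (4 * A ^ 3 + 27 * B ^ 2) := by
  obtain ⟨h₁, h₂, h₃, h₄⟩ := quartic_coeffs_of_eq_C_mul_prod_X_sub_C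
    (a := 0) (b := 6 * A) (c := 12 * B) (d := -A ^ 2)
    (by rw [← hψ]; simp only [map_zero, map_neg]; ring)
  linear_combination
      (9 * (x₁ * x₂ * x₃ + x₁ * x₂ * x₄ + x₁ * x₃ * x₄ + x₂ * x₃ * x₄) * (x₁ * x₂ + x₃ * x₄)
        - 9 * (x₁ + x₂ + x₃ + x₄) * (x₁ * x₂ * x₃ * x₄)) * h₁
      + (9 * (x₁ * x₂ + x₃ * x₄) ^ 2 - 36 * (x₁ * x₂ * x₃ * x₄)) * h₂
      + (-9 * (x₁ * x₂ * x₃ + x₁ * x₂ * x₄ + x₁ * x₃ * x₄ + x₂ * x₃ * x₄) + 36 * B) * h₃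
      + (36 * (x₁ * x₂ + x₃ * x₄) - 72 * A) * h₄

theorem ne_zero_and_neg_48_mul_div_cube {K : Type*} [Field K] (h2 : (2 : K) ≠ 0) {A Δ t : K}
    (hΔ : Δ ≠ 0) (ht : t ^ 3 = -16 * Δ) :
    t ≠ 0 ∧ (-48 * A / t) ^ 3 = 6912 * A ^ 3 / Δ := by
  have h16 : (16 : K) ≠ 0 := by
    simpa [show (16 : K) = 2 ^ 4 by norm_num] using pow_ne_zero 4 h2
  have h16Δ : -16 * Δ ≠ 0 := mul_ne_zero (neg_ne_zero.mpr h16) hΔ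
  refine ⟨fun h => h16Δ (by rw [← ht, h]; ring), ?_⟩
  rw [div_pow, ht, div_eq_div_iff h16Δ hΔ]
  ring

theorem stmt3_general {K : Type*} [Field K] (h2 : (2 : K) ≠ 0)
    (A B : K) (hΔ : 4 * A ^ 3 + 27 * B ^ 2 ≠ 0) (x₁ x₂ x₃ x₄ : K)
    (hψ : C 3 * X ^ 4 + C (6 * A) * X ^ 2 + C (12 * B) * X - C (A ^ 2)
        = C 3 * (X - C x₁) * (X - C x₂) * (X - C x₃) * (X - C x₄))
    (u v w : K) (hu : u = x₁ * x₂ + x₃ * x₄) (hv : v = x₁ * x₃ + x₂ * x₄)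
    (hw : w = x₁ * x₄ + x₂ * x₃) :
    (2 * A - 3 * u ≠ 0 ∧ 2 * A - 3 * v ≠ 0 ∧ 2 * A - 3 * w ≠ 0) ∧
      (-48 * A / (2 * A - 3 * u)) ^ 3 = 6912 * A ^ 3 / (4 * A ^ 3 + 27 * B ^ 2) ∧
      (-48 * A / (2 * A - 3 * v)) ^ 3 = 6912 * A ^ 3 / (4 * A ^ 3 + 27 * B ^ 2) ∧
      (-48 * A / (2 * A - 3 * w)) ^ 3 = 6912 * A ^ 3 / (4 * A ^ 3 + 27 * B ^ 2) := by
  obtain ⟨hu₀, hu₃⟩ := ne_zero_and_neg_48_mul_div_cube (A := A) h2 hΔ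
    (hu ▸ two_mul_sub_three_mul_pair_sum_cube hψ)
  obtain ⟨hv₀, hv₃⟩ := ne_zero_and_neg_48_mul_div_cube (A := A) h2 hΔ
    (hv ▸ two_mul_sub_three_mul_pair_sum_cube (x₂ := x₃) (x₃ := x₂) (hψ.trans (by ring)))
  obtain ⟨hw₀, hw₃⟩ := ne_zero_and_neg_48_mul_div_cube (A := A) h2 hΔ
    (hw ▸ two_mul_sub_three_mul_pair_sum_cube (x₂ := x₄) (x₃ := x₂) (x₄ := x₃)
      (hψ.trans (by ring)))
  exact ⟨⟨hu₀, hv₀, hw₀⟩, hu₃, hv₃, hw₃⟩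

/-- With `ψ₃(X) = 3X⁴ + 6AX² + 12BX − A² = 3(X−x₁)(X−x₂)(X−x₃)(X−x₄)` over a field `K` of
characteristic different from `2` and `3`, with `4A³ + 27B² ≠ 0`, and
`u = x₁x₂ + x₃x₄`, `v = x₁x₃ + x₂x₄`, `w = x₁x₄ + x₂x₃`: the elements
`2A − 3u`, `2A − 3v`, `2A − 3w` are nonzero, and each of
`−48A/(2A − 3u)`, `−48A/(2A − 3v)`, `−48A/(2A − 3w)` is a cube root of
`j(E) = 6912·A³/(4A³ + 27B²)`. -/
theorem stmt3 {K : Type*} [Field K] (h2 : (2 : K) ≠ 0) (h3 : (3 : K) ≠ 0)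
    (A B : K) (hΔ : 4 * A ^ 3 + 27 * B ^ 2 ≠ 0) (x₁ x₂ x₃ x₄ : K)
    (hψ : C 3 * X ^ 4 + C (6 * A) * X ^ 2 + C (12 * B) * X - C (A ^ 2)
        = C 3 * (X - C x₁) * (X - C x₂) * (X - C x₃) * (X - C x₄))
    (u v w : K) (hu : u = x₁ * x₂ + x₃ * x₄) (hv : v = x₁ * x₃ + x₂ * x₄)
    (hw : w = x₁ * x₄ + x₂ * x₃) :
    (2 * A - 3 * u ≠ 0 ∧ 2 * A - 3 * v ≠ 0 ∧ 2 * A - 3 * w ≠ 0) ∧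
      (-48 * A / (2 * A - 3 * u)) ^ 3 = 6912 * A ^ 3 / (4 * A ^ 3 + 27 * B ^ 2) ∧
      (-48 * A / (2 * A - 3 * v)) ^ 3 = 6912 * A ^ 3 / (4 * A ^ 3 + 27 * B ^ 2) ∧
      (-48 * A / (2 * A - 3 * w)) ^ 3 = 6912 * A ^ 3 / (4 * A ^ 3 + 27 * B ^ 2) :=
  stmt3_general h2 A B hΔ x₁ x₂ x₃ x₄ hψ u v w hu hv hw
end

section
/- With notation as in the context, setting c_u = −48A/(2A − 3u), c_v = −48A/(2A − 3v), c_w = −48A/(2A − 3w) (the denominators being nonzero), the following factorization holds in K[X]: X³ − j(E) = (X − c_u)(X − c_v)(X − c_w), where j(E) = 6912·A³/(4A³ + 27B²). In other words, the roots of X³ − j(E) in K are exactly the three values c_u, c_v, c_w. -/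
open Polynomial

/-- With `ψ₃(X) = 3X⁴ + 6AX² + 12BX − A² = 3(X−x₁)(X−x₂)(X−x₃)(X−x₄)` over a field `K` of
characteristic different from `2` and `3`, with `4A³ + 27B² ≠ 0`, and
`u = x₁x₂ + x₃x₄`, `v = x₁x₃ + x₂x₄`, `w = x₁x₄ + x₂x₃`: setting
`c_u = −48A/(2A − 3u)`, `c_v = −48A/(2A − 3v)`, `c_w = −48A/(2A − 3w)` (the denominators
being nonzero), one has `X³ − j(E) = (X − c_u)(X − c_v)(X − c_w)` in `K[X]`, where
`j(E) = 6912·A³/(4A³ + 27B²)`. -/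
theorem stmt4 {K : Type*} [Field K] (h2 : (2 : K) ≠ 0) (h3 : (3 : K) ≠ 0)
    (A B : K) (hΔ : 4 * A ^ 3 + 27 * B ^ 2 ≠ 0) (x₁ x₂ x₃ x₄ : K)
    (hψ : C 3 * X ^ 4 + C (6 * A) * X ^ 2 + C (12 * B) * X - C (A ^ 2)
        = C 3 * (X - C x₁) * (X - C x₂) * (X - C x₃) * (X - C x₄))
    (u v w : K) (hu : u = x₁ * x₂ + x₃ * x₄) (hv : v = x₁ * x₃ + x₂ * x₄)
    (hw : w = x₁ * x₄ + x₂ * x₃) :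
    (2 * A - 3 * u ≠ 0 ∧ 2 * A - 3 * v ≠ 0 ∧ 2 * A - 3 * w ≠ 0) ∧
      X ^ 3 - C (6912 * A ^ 3 / (4 * A ^ 3 + 27 * B ^ 2))
        = (X - C (-48 * A / (2 * A - 3 * u))) * (X - C (-48 * A / (2 * A - 3 * v)))
            * (X - C (-48 * A / (2 * A - 3 * w))) := by
  subst hu hv hw
  have hexp : C 3 * (X - C x₁) * (X - C x₂) * (X - C x₃) * (X - C x₄)
      = C 3 * X^4 + C (-(3*(x₁+x₂+x₃+x₄))) * X^3
        + C (3*(x₁*x₂+x₁*x₃+x₁*x₄+x₂*x₃+x₂*x₄+x₃*x₄)) * X^2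
        + C (-(3*(x₁*x₂*x₃+x₁*x₂*x₄+x₁*x₃*x₄+x₂*x₃*x₄))) * X
        + C (3*(x₁*x₂*x₃*x₄)) := by
    simp only [map_mul, map_add, map_neg, map_ofNat]; ring
  rw [hexp] at hψ
  have hc3 := congrArg (fun p => p.coeff 3) hψ
  have hc2 := congrArg (fun p => p.coeff 2) hψ
  have hc1 := congrArg (fun p => p.coeff 1) hψ
  have hc0 := congrArg (fun p => p.coeff 0) hψ
  simp only [coeff_add, coeff_sub, coeff_C_mul, coeff_X_pow, coeff_X, coeff_C] at hc3 hc2 hc1 hc0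
  norm_num at hc3 hc2 hc1 hc0
  have he1 : x₁ + x₂ + x₃ + x₄ = 0 := hc3.resolve_left h3
  have he2 : x₁*x₂+x₁*x₃+x₁*x₄+x₂*x₃+x₂*x₄+x₃*x₄ = 2*A :=
    mul_left_cancel₀ h3 (by linear_combination -hc2)
  have he3 : x₁*x₂*x₃+x₁*x₂*x₄+x₁*x₃*x₄+x₂*x₃*x₄ = -(4*B) :=
    mul_left_cancel₀ h3 (by linear_combination hc1)
  -- hc0 : -A ^ 2 = 3 * (x₁ * x₂ * x₃ * x₄)
  set du := 2 * A - 3 * (x₁ * x₂ + x₃ * x₄) with hdu_def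
  set dv := 2 * A - 3 * (x₁ * x₃ + x₂ * x₄) with hdv_def
  set dw := 2 * A - 3 * (x₁ * x₄ + x₂ * x₃) with hdw_def
  have hP : du * dv * dw = -16 * (4 * A ^ 3 + 27 * B ^ 2) := by
    rw [hdu_def, hdv_def, hdw_def]
    linear_combination (18*A*(x₁*x₂*x₃+x₁*x₂*x₄+x₁*x₃*x₄+x₂*x₃*x₄)
        - 27*(x₁+x₂+x₃+x₄)*(x₁*x₂*x₃*x₄))*he1
      + (-12*A^2+108*(x₁*x₂*x₃*x₄))*he2
      - 27*((x₁*x₂*x₃+x₁*x₂*x₄+x₁*x₃*x₄+x₂*x₃*x₄)-4*B)*he3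
      + (-48*A)*hc0
  have q2 : du + dv + dw = 0 := by
    rw [hdu_def, hdv_def, hdw_def]; linear_combination (-3)*he2
  have q1 : dv * dw + du * dw + du * dv = 0 := by
    rw [hdu_def, hdv_def, hdw_def]
    linear_combination 9*(x₁*x₂*x₃+x₁*x₂*x₄+x₁*x₃*x₄+x₂*x₃*x₄)*he1 - 12*A*he2 + 12*hc0
  have h16 : (-16 : K) ≠ 0 := by
    intro h; apply h2; have : (2:K)^4 = 0 := by linear_combination -h
    exact pow_eq_zero_iff (by norm_num) |>.mp this
  have hprod : du * dv * dw ≠ 0 := by rw [hP]; exact mul_ne_zero h16 hΔ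
  have hdu : du ≠ 0 := left_ne_zero_of_mul (left_ne_zero_of_mul hprod)
  have hdv : dv ≠ 0 := right_ne_zero_of_mul (left_ne_zero_of_mul hprod)
  have hdw : dw ≠ 0 := right_ne_zero_of_mul hprod
  refine ⟨⟨hdu, hdv, hdw⟩, ?_⟩
  have S1 : -48 * A / du + -48 * A / dv + -48 * A / dw = 0 := by
    field_simp
    linear_combination (-48*A) * q1
  have S2 : (-48 * A / du) * (-48 * A / dv) + (-48 * A / du) * (-48 * A / dw)
      + (-48 * A / dv) * (-48 * A / dw) = 0 := by
    field_simp
    linear_combination (2304*A^2) * q2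
  have S3 : (-48 * A / du) * (-48 * A / dv) * (-48 * A / dw)
      = 6912 * A ^ 3 / (4 * A ^ 3 + 27 * B ^ 2) := by
    rw [div_mul_div_comm, div_mul_div_comm, div_eq_div_iff (mul_ne_zero (mul_ne_zero hdu hdv) hdw) hΔ]
    linear_combination (-6912*A^3) * hP
  have ce1 : C (-48 * A / du) + C (-48 * A / dv) + C (-48 * A / dw) = 0 := by
    rw [← C_add, ← C_add, S1, C_0]
  have ce2 : C (-48 * A / du) * C (-48 * A / dv) + C (-48 * A / du) * C (-48 * A / dw)
      + C (-48 * A / dv) * C (-48 * A / dw) = 0 := by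
    rw [← C_mul, ← C_mul, ← C_mul, ← C_add, ← C_add, S2, C_0]
  have ce3 : C (6912 * A ^ 3 / (4 * A ^ 3 + 27 * B ^ 2))
      = C (-48 * A / du) * C (-48 * A / dv) * C (-48 * A / dw) := by
    rw [← C_mul, ← C_mul, S3]
  linear_combination (X^2 : K[X]) * ce1 - (X : K[X]) * ce2 - ce3
end
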